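/- arXiv:1007.0353 — 2 statements merged into one kernel-verified Lean document; each statement's English description precedes it below -/
import Mathlib

section
/- If q is a positive integer not divisible by 8, then for every ε > 0, the number λ(q) of pairs (x, y) with 1 ≤ x, y ≤ q and x² + y² + 1 ≡ 0 (mod q) satisfies λ(q) ≪_ε q^{1+ε}. -/
/-!
Reducing modulo `q`, `λ(q)` counts pairs in `ZMod q` with `x² + y² = -1`. With `R(a)` the number
of square roots of `a`, this count is `∑ₐ R(a) R(-1 - a)`, which Cauchy–Schwarz bounds by
`∑ₐ R(a)² = #{x² = y²}`. The substitution `(x, y) ↦ (x - y, x + y)` is additive with kernel of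
size at most `#{v | 2v = 0} ≤ 2` and turns `x² = y²` into `uv = 0`. Finally
`#{uv = 0} = ∑ᵤ gcd(q, u) ≤ q τ(q)`, and `τ(q) ≪_ε q^ε`.
-/

open Finset

/-- λ(q) = number of pairs 1 ≤ x, y ≤ q with x² + y² + 1 ≡ 0 (mod q). -/
def lamCount (q : ℕ) : ℕ :=
  ((Finset.Icc 1 q ×ˢ Finset.Icc 1 q).filter
    (fun p : ℕ × ℕ => (q : ℤ) ∣ ((p.1 : ℤ)^2 + (p.2 : ℤ)^2 + 1))).card

theorem Finset.card_filter_prod_eq_sum {α β : Type*} [Fintype α] [Fintype β]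
    (P : α → β → Prop) [∀ a, DecidablePred (P a)] :
    #{p : α × β | P p.1 p.2} = ∑ a, #{b | P a b} := by
  simp only [card_filter, ← univ_product_univ, sum_product]

theorem card_add_eq_le_card_eq {α G : Type*} [Fintype α] [AddCommGroup G] [Fintype G]
    [DecidableEq G] (g : α → G) (c : G) :
    #{p : α × α | g p.1 + g p.2 = c} ≤ #{p : α × α | g p.1 = g p.2} := by
  set R : G → ℕ := fun a => #{x | g x = a}
  have hfib (F : G → ℕ) : ∑ x, F (g x) = ∑ a, R a * F a := by
    rw [← sum_fiberwise univ g]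
    refine sum_congr rfl fun a _ => ?_
    rw [sum_congr rfl fun x hx => congrArg F (mem_filter.mp hx).2, sum_const, smul_eq_mul]
  have hS : #{p : α × α | g p.1 + g p.2 = c} = ∑ a, R a * R (c - a) := by
    rw [card_filter_prod_eq_sum (fun x y => g x + g y = c), ← hfib (fun a => R (c - a))]
    simp_rw [R, ← eq_sub_iff_add_eq']
  have hD : #{p : α × α | g p.1 = g p.2} = ∑ a, R a ^ 2 := by
    rw [card_filter_prod_eq_sum (fun x y => g x = g y)]
    simp_rw [sq]
    rw [← hfib R]
    simp_rw [R, eq_comm]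
  have hreflect : ∑ a, R (c - a) ^ 2 = ∑ a, R a ^ 2 :=
    Fintype.sum_equiv (Equiv.subLeft c) _ _ fun _ => rfl
  have hCS := sum_mul_sq_le_sq_mul_sq univ R (fun a => R (c - a))
  rw [hreflect, ← sq] at hCS
  rw [hS, hD]
  exact le_of_pow_le_pow_left₀ two_ne_zero (Nat.zero_le _) hCS

theorem AddMonoidHom.card_filter_mem_le {G H : Type*} [AddGroup G] [Fintype G] [AddMonoid H]
    [DecidableEq H] (φ : G →+ H) (t : Finset H) :
    #{g | φ g ∈ t} ≤ #{g | φ g = 0} * #t := by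
  refine card_le_mul_card_image_of_maps_to (fun g hg => (mem_filter.mp hg).2) _ fun h _ => ?_
  by_cases hh : h ∈ Set.range φ
  · rw [AddMonoidHom.card_fiber_eq_of_mem_range φ ⟨0, map_zero φ⟩ hh]
    exact card_le_card fun g hg => by simp_all
  · refine (card_eq_zero.mpr (filter_eq_empty_iff.mpr fun g _ hg => hh ⟨g, hg⟩)).trans_le ?_
    exact Nat.zero_le _

theorem card_sq_eq_sq_le {R : Type*} [CommRing R] [Fintype R] [DecidableEq R] :
    #{p : R × R | p.1 ^ 2 = p.2 ^ 2} ≤ #{v : R | v + v = 0} * #{p : R × R | p.1 * p.2 = 0} := by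
  let φ : R × R →+ R × R :=
    AddMonoidHom.mk' (fun p => (p.1 - p.2, p.1 + p.2)) fun a b => by ext <;> simp <;> abel
  have hpre : #{p : R × R | p.1 ^ 2 = p.2 ^ 2} =
      #{p | φ p ∈ ({p : R × R | p.1 * p.2 = 0} : Finset _)} := by
    congr 1; ext p
    simp only [mem_filter, mem_univ, true_and, φ, AddMonoidHom.mk'_apply]
    rw [← sub_eq_zero, ← mul_comm, ← sq_sub_sq]
  have hker : #{p | φ p = 0} ≤ #{v : R | v + v = 0} := by
    refine card_le_card_of_injOn Prod.fst (fun p hp => ?_) fun p hp p' hp' h => ?_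
    · obtain ⟨h₁, h₂⟩ : p.1 - p.2 = 0 ∧ p.1 + p.2 = 0 := by simpa [φ, Prod.ext_iff] using hp
      simpa [sub_eq_zero.mp h₁] using h₂
    · simp_all [φ, Prod.ext_iff, sub_eq_zero]
  rw [hpre]
  exact (φ.card_filter_mem_le _).trans (Nat.mul_le_mul_right _ hker)

theorem add_one_le_rpow_of_two_le_rpow {ε x : ℝ} (hx₀ : 0 ≤ x) (hx : 2 ≤ x ^ ε) (k : ℕ) :
    (k + 1 : ℝ) ≤ (x ^ k) ^ ε := by
  rw [← Real.rpow_natCast, ← Real.rpow_mul hx₀, mul_comm, Real.rpow_mul hx₀, Real.rpow_natCast]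
  calc (k + 1 : ℝ) ≤ 2 ^ k := by exact_mod_cast Nat.lt_two_pow_self
    _ ≤ (x ^ ε) ^ k := pow_le_pow_left₀ zero_le_two hx k

theorem add_one_le_mul_rpow {ε x : ℝ} (hε : 0 < ε) (hx : 2 ≤ x) (k : ℕ) :
    (k + 1 : ℝ) ≤ (1 + (ε * Real.log 2)⁻¹) * (x ^ k) ^ ε := by
  set δ := ε * Real.log 2 with hδ_def
  have hδ : 0 < δ := mul_pos hε (Real.log_pos one_lt_two)
  have hexp : 1 + δ * k ≤ (x ^ k) ^ ε :=
    calc 1 + δ * k ≤ Real.exp (δ * k) := by linarith [Real.add_one_le_exp (δ * k)]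
      _ = ((2 : ℝ) ^ k) ^ ε := by
          rw [Real.rpow_def_of_pos (by positivity), Real.log_pow, hδ_def]; ring_nf
      _ ≤ (x ^ k) ^ ε := by gcongr
  have hk : (0 : ℝ) ≤ k := k.cast_nonneg
  calc (k + 1 : ℝ) ≤ (1 + δ⁻¹) * (1 + δ * k) := by
        field_simp; nlinarith [mul_nonneg hδ.le hk]
    _ ≤ (1 + δ⁻¹) * (x ^ k) ^ ε := by gcongr

theorem Nat.card_divisors_le_mul_rpow {ε : ℝ} (hε : 0 < ε) :
    ∃ C : ℝ, 0 < C ∧ ∀ n : ℕ, n ≠ 0 → (#n.divisors : ℝ) ≤ C * (n : ℝ) ^ ε := by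
  set C₀ := 1 + (ε * Real.log 2)⁻¹
  have hC₀ : 1 ≤ C₀ :=
    le_add_of_nonneg_right (inv_nonneg.mpr (mul_nonneg hε.le (Real.log_nonneg one_le_two)))
  -- only the primes `p < B` have `p ^ ε < 2`, and each of them costs at most a factor `C₀`
  set B := ⌈(2 : ℝ) ^ ε⁻¹⌉₊
  refine ⟨C₀ ^ B, by positivity, fun n hn => ?_⟩
  have hfactor : ∀ p ∈ n.primeFactors, (n.factorization p + 1 : ℝ) ≤
      (if p < B then C₀ else 1) * ((p : ℝ) ^ n.factorization p) ^ ε := by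
    intro p hp
    split_ifs with hpB
    · exact add_one_le_mul_rpow hε (mod_cast (Nat.prime_of_mem_primeFactors hp).two_le) _
    · rw [one_mul]
      refine add_one_le_rpow_of_two_le_rpow p.cast_nonneg ?_ _
      calc (2 : ℝ) = ((2 : ℝ) ^ ε⁻¹) ^ ε := by
            rw [← Real.rpow_mul zero_le_two, inv_mul_cancel₀ hε.ne', Real.rpow_one]
        _ ≤ (p : ℝ) ^ ε := by
            gcongr; exact (Nat.le_ceil _).trans (mod_cast not_lt.mp hpB)
  have hconst : ∏ p ∈ n.primeFactors, (if p < B then C₀ else 1) ≤ C₀ ^ B := by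
    rw [prod_ite, prod_const, prod_const_one, mul_one]
    refine pow_le_pow_right₀ hC₀ ((card_le_card fun p hp => ?_).trans (card_range B).le)
    exact mem_range.mpr (mem_filter.mp hp).2
  have hrpow : (n : ℝ) ^ ε = ∏ p ∈ n.primeFactors, ((p : ℝ) ^ n.factorization p) ^ ε := by
    rw [Real.finsetProd_rpow _ _ fun _ _ => by positivity]
    exact_mod_cast congrArg (fun m : ℕ => (m : ℝ) ^ ε) (Nat.prod_primeFactors_pow_factorization hn)
  calc (#n.divisors : ℝ) = ∏ p ∈ n.primeFactors, (n.factorization p + 1 : ℝ) := by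
        rw [Nat.card_divisors hn]; push_cast; rfl
    _ ≤ ∏ p ∈ n.primeFactors, (if p < B then C₀ else 1) * ((p : ℝ) ^ n.factorization p) ^ ε :=
        prod_le_prod (fun _ _ => by positivity) hfactor
    _ ≤ C₀ ^ B * (n : ℝ) ^ ε := by
        rw [prod_mul_distrib, hrpow]
        gcongr

theorem Nat.sum_range_gcd_le (n : ℕ) : ∑ k ∈ range n, n.gcd k ≤ n * #n.divisors := by
  rcases n.eq_zero_or_pos with rfl | hn
  · simp
  have hmaps : ∀ k ∈ range n, n.gcd k ∈ n.divisors :=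
    fun k _ => Nat.mem_divisors.mpr ⟨Nat.gcd_dvd_left _ _, hn.ne'⟩
  calc ∑ k ∈ range n, n.gcd k
      = ∑ d ∈ n.divisors, ∑ k ∈ range n with n.gcd k = d, n.gcd k :=
        (sum_fiberwise_of_maps_to hmaps _).symm
    _ = ∑ d ∈ n.divisors, Nat.totient (n / d) * d := by
        refine sum_congr rfl fun d hd => ?_
        rw [Nat.totient_div_of_dvd (Nat.dvd_of_mem_divisors hd), ← smul_eq_mul, ← sum_const]
        exact sum_congr rfl fun k hk => (mem_filter.mp hk).2
    _ ≤ ∑ d ∈ n.divisors, n / d * d := by gcongr; exact Nat.totient_le _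
    _ = n * #n.divisors := by
        rw [mul_comm, ← smul_eq_mul, ← sum_const]
        exact sum_congr rfl fun d hd => Nat.div_mul_cancel (Nat.dvd_of_mem_divisors hd)

theorem ZMod.card_filter_nsmul_eq_zero (q : ℕ) [NeZero q] (n : ℕ) :
    #{w : ZMod q | n • w = 0} = q.gcd n := by
  have hker := IsAddCyclic.card_nsmulAddMonoidHom_ker (ZMod q) n
  rw [Nat.card_zmod] at hker
  rw [← hker, Nat.card_eq_fintype_card, ← Fintype.card_subtype]
  exact Fintype.card_congr (Equiv.refl _)

theorem ZMod.card_mul_eq_zero_le (q : ℕ) [NeZero q] :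
    #{p : ZMod q × ZMod q | p.1 * p.2 = 0} ≤ q * #q.divisors := by
  have hfiber (u : ZMod q) : #{w : ZMod q | u * w = 0} = q.gcd u.val := by
    simpa [nsmul_eq_mul] using ZMod.card_filter_nsmul_eq_zero q u.val
  rw [card_filter_prod_eq_sum (fun u w : ZMod q => u * w = 0)]
  simp only [hfiber]
  obtain ⟨n, rfl⟩ : ∃ n, q = n + 1 := Nat.exists_eq_succ_of_ne_zero (NeZero.ne q)
  exact (Fin.sum_univ_eq_sum_range _ _).trans_le (Nat.sum_range_gcd_le _)

theorem ZMod.card_sq_add_sq_eq_neg_one_le (q : ℕ) [NeZero q] :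
    #{p : ZMod q × ZMod q | p.1 ^ 2 + p.2 ^ 2 = -1} ≤ 2 * (q * #q.divisors) := by
  have htwo : #{v : ZMod q | v + v = 0} ≤ 2 := by
    simp_rw [← two_nsmul, ZMod.card_filter_nsmul_eq_zero]
    exact Nat.gcd_le_right (m := q) (n := 2) two_pos
  calc #{p : ZMod q × ZMod q | p.1 ^ 2 + p.2 ^ 2 = -1}
      ≤ #{p : ZMod q × ZMod q | p.1 ^ 2 = p.2 ^ 2} := card_add_eq_le_card_eq (· ^ 2) (-1)
    _ ≤ #{v : ZMod q | v + v = 0} * #{p : ZMod q × ZMod q | p.1 * p.2 = 0} := card_sq_eq_sq_le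
    _ ≤ 2 * (q * #q.divisors) := Nat.mul_le_mul htwo (ZMod.card_mul_eq_zero_le q)

theorem ZMod.val_sub_one_add_one_natCast {q x : ℕ} (hx : x ∈ Icc 1 q) :
    ((x : ZMod q) - 1).val + 1 = x := by
  obtain ⟨h1, hq⟩ := mem_Icc.mp hx
  rw [← Nat.cast_one, ← Nat.cast_sub h1, ZMod.val_cast_of_lt (by omega), Nat.sub_add_cancel h1]

theorem lamCount_eq (q : ℕ) [NeZero q] :
    lamCount q = #{p : ZMod q × ZMod q | p.1 ^ 2 + p.2 ^ 2 = -1} := by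
  have hdvd (x y : ℕ) :
      (q : ℤ) ∣ (x : ℤ) ^ 2 + (y : ℤ) ^ 2 + 1 ↔ (x : ZMod q) ^ 2 + (y : ZMod q) ^ 2 = -1 := by
    rw [← ZMod.intCast_zmod_eq_zero_iff_dvd, eq_neg_iff_add_eq_zero]
    push_cast; rfl
  -- `u ↦ (u - 1).val + 1` inverts the reduction map `Icc 1 q → ZMod q`
  have hlift (u : ZMod q) : (((u - 1).val + 1 : ℕ) : ZMod q) = u := by simp
  refine card_bij' (fun p _ => ((p.1 : ZMod q), (p.2 : ZMod q)))
    (fun u _ => ((u.1 - 1).val + 1, (u.2 - 1).val + 1)) ?_ ?_ ?_ ?_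
  · intro p hp
    simp only [mem_filter, mem_product] at hp
    simpa using (hdvd p.1 p.2).mp hp.2
  · intro u hu
    simp only [mem_filter, mem_univ, true_and] at hu
    simp only [mem_filter, mem_product, mem_Icc, hdvd, hlift]
    exact ⟨⟨⟨by omega, ZMod.val_lt _⟩, by omega, ZMod.val_lt _⟩, hu⟩
  · intro p hp
    simp only [mem_filter, mem_product] at hp
    exact Prod.ext (ZMod.val_sub_one_add_one_natCast hp.1.1)
      (ZMod.val_sub_one_add_one_natCast hp.1.2)
  · intro u _
    exact Prod.ext (hlift u.1) (hlift u.2)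

theorem stmt_8 : ∀ ε : ℝ, 0 < ε → ∃ C : ℝ, 0 < C ∧
    ∀ q : ℕ, 0 < q → ¬ (8 ∣ q) → (lamCount q : ℝ) ≤ C * (q : ℝ) ^ (1 + ε) := by
  intro ε hε
  obtain ⟨C, hC, hτ⟩ := Nat.card_divisors_le_mul_rpow hε
  refine ⟨2 * C, by positivity, fun q hq _ => ?_⟩
  have : NeZero q := ⟨hq.ne'⟩
  have hcount : (lamCount q : ℝ) ≤ 2 * (q * #q.divisors) := by
    exact_mod_cast (lamCount_eq q).trans_le (ZMod.card_sq_add_sq_eq_neg_one_le q)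
  calc (lamCount q : ℝ) ≤ 2 * (q * #q.divisors) := hcount
    _ ≤ 2 * (q * (C * (q : ℝ) ^ ε)) := by gcongr; exact hτ q hq.ne'
    _ = 2 * C * (q : ℝ) ^ (1 + ε) := by
        rw [Real.rpow_add (by positivity), Real.rpow_one]; ring
end

section
/- For every ε > 0 and every positive integer d, the number T(H, d²) of pairs of positive integers x, y ≤ H with x² + y² + 1 ≡ 0 (mod d²) satisfies T(H, d²) ≪_ε H^{2+ε}/d², uniformly in d and H ≥ 2. -/
/-!
A pair counted by `T(H, d²)` has `x² + y² + 1 = m` with `d² ∣ m ≤ 2H² + 1`, so there are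
`≪ H²/d²` admissible `m`, each contributing at most `r(m - 1)` pairs, where `r(n)` counts the
representations `n = x² + y²` with `x, y ≥ 1`. Dividing a representation by `g = gcd(x, y)`
gives a primitive representation `(a, b)` of `n / g²`, which is determined by the square root
`a / b` of `-1` modulo `n / g²`. By the Chinese remainder theorem there are at most `τ(n / g²)`
such roots (at most two modulo a prime power, as `ZMod (p ^ k)` is local), so
`r(n) ≤ τ(n)² ≪ n ^ ε`.
-/

open Finset

/-- T(H, q) = number of pairs of positive integers x, y ≤ H with x² + y² + 1 ≡ 0 (mod q). -/
noncomputable def Tcount (H : ℝ) (q : ℕ) : ℕ :=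
  ((Finset.Icc 1 ⌊H⌋₊ ×ˢ Finset.Icc 1 ⌊H⌋₊).filter
    (fun p : ℕ × ℕ => (q : ℤ) ∣ ((p.1 : ℤ)^2 + (p.2 : ℤ)^2 + 1))).card

section SqrtNegOne

variable {R : Type*} [CommRing R]

lemma isUnit_of_sq_eq_neg_one {t : R} (ht : t ^ 2 = -1) : IsUnit t :=
  .of_mul_eq_one (-t) (by rw [mul_neg, ← sq, ht, neg_neg])

lemma eq_or_eq_neg_of_sq_eq_sq_of_isUnit [IsLocalRing R] (h2 : IsUnit (2 : R)) {s t : R}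
    (ht : IsUnit t) (h : t ^ 2 = s ^ 2) : t = s ∨ t = -s := by
  have hprod : (t - s) * (t + s) = 0 := by linear_combination h
  have hsum : IsUnit ((t - s) + (t + s)) := by
    convert h2.mul ht using 1
    ring
  rcases IsLocalRing.isUnit_or_isUnit_of_isUnit_add hsum with hu | hu
  · exact .inr (eq_neg_of_add_eq_zero_left (hu.mul_right_eq_zero.mp hprod))
  · exact .inl (sub_eq_zero.mp (hu.mul_left_eq_zero.mp hprod))

lemma card_sq_eq_neg_one_le_two [IsLocalRing R] (h2 : IsUnit (2 : R)) :
    Nat.card {t : R // t ^ 2 = -1} ≤ 2 := by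
  rcases isEmpty_or_nonempty {t : R // t ^ 2 = -1} with h | ⟨⟨s, hs⟩⟩
  · simp
  have hsub : {t : R | t ^ 2 = -1} ⊆ {s, -s} := fun t ht =>
    eq_or_eq_neg_of_sq_eq_sq_of_isUnit h2 (isUnit_of_sq_eq_neg_one ht) (ht.trans hs.symm)
  calc Nat.card {t : R // t ^ 2 = -1} = Set.ncard {t : R | t ^ 2 = -1} := Nat.card_coe_set_eq _
    _ ≤ Set.ncard {s, -s} := Set.ncard_le_ncard hsub
    _ ≤ 2 := (Set.ncard_insert_le _ _).trans (by simp)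

lemma card_sq_eq_neg_one_congr {S : Type*} [CommRing S] (e : R ≃+* S) :
    Nat.card {t : R // t ^ 2 = -1} = Nat.card {t : S // t ^ 2 = -1} :=
  Nat.card_congr <| e.toEquiv.subtypeEquiv fun t => by
    rw [RingEquiv.toEquiv_eq_coe, RingEquiv.coe_toEquiv, ← e.injective.eq_iff, map_pow, map_neg,
      map_one]

lemma card_sq_eq_neg_one_prod {S : Type*} [CommRing S] :
    Nat.card {t : R × S // t ^ 2 = -1} =
      Nat.card {t : R // t ^ 2 = -1} * Nat.card {t : S // t ^ 2 = -1} := by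
  rw [← Nat.card_prod]
  exact Nat.card_congr <| (Equiv.subtypeEquivRight fun t : R × S => by simp [Prod.ext_iff]).trans
    Equiv.subtypeProdEquivProd

end SqrtNegOne

lemma ZMod.isUnit_of_castHom_ne_zero {p k : ℕ} (hp : p.Prime) (hk : k ≠ 0) {x : ZMod (p ^ k)}
    (hx : ZMod.castHom (dvd_pow_self p hk) (ZMod p) x ≠ 0) : IsUnit x := by
  have : NeZero (p ^ k) := ⟨pow_ne_zero k hp.ne_zero⟩
  rw [ZMod.castHom_apply, ZMod.cast_eq_val, ne_eq, ZMod.natCast_eq_zero_iff] at hx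
  rw [← ZMod.natCast_zmod_val x, ZMod.isUnit_iff_coprime]
  exact ((hp.coprime_iff_not_dvd.mpr hx).pow_left k).symm

lemma ZMod.isLocalRing_prime_pow {p k : ℕ} (hp : p.Prime) (hk : k ≠ 0) :
    IsLocalRing (ZMod (p ^ k)) := by
  have : Fact (1 < p ^ k) := ⟨Nat.one_lt_pow hk hp.one_lt⟩
  have : Fact p.Prime := ⟨hp⟩
  refine .of_isUnit_or_isUnit_one_sub_self fun a => ?_
  by_cases ha : ZMod.castHom (dvd_pow_self p hk) (ZMod p) a = 0
  · refine .inr (isUnit_of_castHom_ne_zero hp hk ?_)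
    rw [map_sub, map_one, ha, sub_zero]
    exact one_ne_zero
  · exact .inl (isUnit_of_castHom_ne_zero hp hk ha)

lemma card_sq_eq_neg_one_zmod_prime_pow_le_two {p k : ℕ} (hp : p.Prime) (hk : k ≠ 0) :
    Nat.card {t : ZMod (p ^ k) // t ^ 2 = -1} ≤ 2 := by
  rcases hp.eq_two_or_odd' with rfl | hodd
  · obtain rfl | hk2 : k = 1 ∨ 2 ≤ k := by omega
    · exact (Finite.card_subtype_le _).trans (by simp)
    · have hsq : ∀ u : ZMod (2 ^ 2), u ^ 2 ≠ -1 := by decide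
      have : IsEmpty {t : ZMod (2 ^ k) // t ^ 2 = -1} := ⟨fun ⟨t, ht⟩ =>
        hsq (ZMod.castHom (pow_dvd_pow 2 hk2) _ t) (by rw [← map_pow, ht, map_neg, map_one])⟩
      simp
  · have := ZMod.isLocalRing_prime_pow hp hk
    refine card_sq_eq_neg_one_le_two ?_
    rw [← Nat.cast_ofNat, ZMod.isUnit_iff_coprime, Nat.coprime_two_left]
    exact hodd.pow

theorem card_sq_eq_neg_one_zmod_le_card_divisors (n : ℕ) :
    Nat.card {t : ZMod n // t ^ 2 = -1} ≤ #n.divisors := by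
  induction n using Nat.recOnPosPrimePosCoprime with
  | zero =>
    have key : ∀ u : ℤ, u ^ 2 ≠ -1 := fun u => by nlinarith [sq_nonneg u]
    have : IsEmpty {t : ZMod 0 // t ^ 2 = -1} := ⟨fun ⟨t, ht⟩ => key t ht⟩
    simp
  | one => exact (Finite.card_subtype_le _).trans (by simp)
  | prime_pow p k hp hk =>
    refine (card_sq_eq_neg_one_zmod_prime_pow_le_two hp hk.ne').trans ?_
    simp [Nat.divisors_prime_pow hp]
    omega
  | coprime a b _ _ hab iha ihb =>
    rw [card_sq_eq_neg_one_congr (ZMod.chineseRemainder hab), card_sq_eq_neg_one_prod,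
      Nat.Coprime.card_divisors_mul hab]
    exact Nat.mul_le_mul iha ihb

def sumSqReps (m : ℕ) : Finset (ℕ × ℕ) :=
  (Icc 1 m ×ˢ Icc 1 m).filter fun p => p.1 ^ 2 + p.2 ^ 2 = m

lemma mem_sumSqReps {m : ℕ} {p : ℕ × ℕ} :
    p ∈ sumSqReps m ↔ 0 < p.1 ∧ 0 < p.2 ∧ p.1 ^ 2 + p.2 ^ 2 = m := by
  have h1 := Nat.le_self_pow two_ne_zero p.1
  have h2 := Nat.le_self_pow two_ne_zero p.2
  simp only [sumSqReps, mem_filter, mem_product, mem_Icc]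
  constructor
  · rintro ⟨⟨⟨ha, -⟩, hb, -⟩, h⟩
    exact ⟨ha, hb, h⟩
  · rintro ⟨ha, hb, h⟩
    exact ⟨⟨⟨ha, by omega⟩, hb, by omega⟩, h⟩

lemma Nat.ModEq.mul_eq_mul_of_sq_add_sq_eq {a b c d N : ℕ} (ha : 0 < a) (hb : 0 < b)
    (hc : 0 < c) (hd : 0 < d) (hab : a ^ 2 + b ^ 2 = N) (hcd : c ^ 2 + d ^ 2 = N)
    (h : a * d ≡ c * b [MOD N]) : a * d = c * b := by
  refine h.eq_of_abs_lt (abs_lt_of_sq_lt_sq ?_ (Nat.cast_nonneg N))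
  have hab' : (a : ℤ) ^ 2 + b ^ 2 = N := by exact_mod_cast hab
  have hcd' : (c : ℤ) ^ 2 + d ^ 2 = N := by exact_mod_cast hcd
  have hN : ((c : ℤ) * b - a * d) ^ 2 + (a * c + b * d) ^ 2 = (N : ℤ) ^ 2 := by
    linear_combination (c ^ 2 + d ^ 2 : ℤ) * hab' + (N : ℤ) * hcd'
  have hpos : (0 : ℤ) < (a * c + b * d) ^ 2 := by positivity
  push_cast
  linarith

lemma Nat.Coprime.eq_and_eq_of_mul_eq_mul {a b c d : ℕ} (hab : a.Coprime b) (hcd : c.Coprime d)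
    (hc : 0 < c) (h : a * d = c * b) : a = c ∧ b = d := by
  have hac : a = c := Nat.dvd_antisymm (hab.dvd_of_dvd_mul_right (Dvd.intro _ h))
    (hcd.dvd_of_dvd_mul_right (Dvd.intro _ h.symm))
  subst hac
  exact ⟨rfl, (Nat.mul_left_cancel hc h).symm⟩

lemma Nat.Coprime.coprime_sq_add_sq {a b : ℕ} (h : a.Coprime b) : b.Coprime (a ^ 2 + b ^ 2) := by
  rw [sq b, Nat.coprime_add_mul_right_right]
  exact h.symm.pow_right 2

/-- Primitive representations `N = a² + b²` inject into the square roots of `-1` modulo `N`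
via `(a, b) ↦ a / b`. -/
lemma card_filter_coprime_sumSqReps_le (N : ℕ) :
    #((sumSqReps N).filter fun p => p.1.Coprime p.2) ≤ Nat.card {t : ZMod N // t ^ 2 = -1} := by
  rcases eq_or_ne N 0 with rfl | hN
  · simp [sumSqReps]
  have : NeZero N := ⟨hN⟩
  rw [Nat.card_eq_fintype_card, Fintype.card_subtype]
  have hunit : ∀ p ∈ (sumSqReps N).filter fun p => p.1.Coprime p.2,
      (p.2 : ZMod N) * (p.2 : ZMod N)⁻¹ = 1 ∧ (p.1 : ZMod N) ^ 2 + (p.2 : ZMod N) ^ 2 = 0 := by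
    intro p hp
    obtain ⟨⟨-, -, hsum⟩, hcop⟩ := (mem_filter.mp hp).imp_left mem_sumSqReps.mp
    refine ⟨ZMod.mul_inv_of_unit _ ((ZMod.isUnit_iff_coprime _ _).mpr ?_), ?_⟩
    · exact hsum ▸ hcop.coprime_sq_add_sq
    · exact_mod_cast (ZMod.natCast_eq_zero_iff _ _).mpr (dvd_of_eq hsum.symm)
  refine card_le_card_of_injOn (fun p => (p.1 : ZMod N) * (p.2 : ZMod N)⁻¹) ?_ ?_
  · intro p hp
    obtain ⟨hinv, hzero⟩ := hunit p hp
    rw [mem_coe, mem_filter]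
    refine ⟨mem_univ _, ?_⟩
    linear_combination
      (p.2 : ZMod N)⁻¹ ^ 2 * hzero - ((p.2 : ZMod N) * (p.2 : ZMod N)⁻¹ + 1) * hinv
  · intro p hp q hq hpq
    obtain ⟨hpinv, -⟩ := hunit p hp
    obtain ⟨hqinv, -⟩ := hunit q hq
    obtain ⟨⟨hp1, hp2, hpN⟩, hpcop⟩ := (mem_filter.mp hp).imp_left mem_sumSqReps.mp
    obtain ⟨⟨hq1, hq2, hqN⟩, hqcop⟩ := (mem_filter.mp hq).imp_left mem_sumSqReps.mp
    have hmod : p.1 * q.2 ≡ q.1 * p.2 [MOD N] := by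
      rw [← ZMod.natCast_eq_natCast_iff]
      push_cast
      linear_combination (p.2 * q.2 : ZMod N) * hpq - (p.1 * q.2 : ZMod N) * hpinv
        + (q.1 * p.2 : ZMod N) * hqinv
    have hcross := hmod.mul_eq_mul_of_sq_add_sq_eq hp1 hp2 hq1 hq2 hpN hqN
    obtain ⟨h1, h2⟩ := hpcop.eq_and_eq_of_mul_eq_mul hqcop hq1 hcross
    exact Prod.ext h1 h2

lemma card_sumSqReps_le (m : ℕ) : #(sumSqReps m) ≤ #m.divisors ^ 2 := by
  have hsub : sumSqReps m ⊆ (m.divisors.filter fun g => g ^ 2 ∣ m).biUnion fun g =>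
      ((sumSqReps (m / g ^ 2)).filter fun p => p.1.Coprime p.2).image
        fun p => (g * p.1, g * p.2) := by
    rintro ⟨x, y⟩ hxy
    obtain ⟨hx, hy, hm⟩ := mem_sumSqReps.mp hxy
    dsimp only at hx hy hm
    obtain ⟨a, b, hab, hxa, hyb⟩ := Nat.exists_coprime x y
    set g := x.gcd y
    have hg : 0 < g := Nat.gcd_pos_of_pos_left y hx
    clear_value g
    subst hxa hyb
    have hgm : g ^ 2 ∣ m := ⟨a ^ 2 + b ^ 2, by rw [← hm]; ring⟩
    have hm' : m / g ^ 2 = a ^ 2 + b ^ 2 :=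
      Nat.div_eq_of_eq_mul_left (by positivity) (by rw [← hm]; ring)
    have hm0 : m ≠ 0 := by rw [← hm]; positivity
    refine mem_biUnion.mpr ⟨g, ?_, mem_image.mpr ⟨(a, b), ?_, by simp [mul_comm]⟩⟩
    · exact mem_filter.mpr
        ⟨Nat.mem_divisors.mpr ⟨(dvd_pow_self g two_ne_zero).trans hgm, hm0⟩, hgm⟩
    · exact mem_filter.mpr ⟨mem_sumSqReps.mpr
        ⟨Nat.pos_of_mul_pos_right hx, Nat.pos_of_mul_pos_right hy, hm'.symm⟩, hab⟩
  calc #(sumSqReps m)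
      ≤ ∑ g ∈ m.divisors.filter (fun g => g ^ 2 ∣ m),
          #(((sumSqReps (m / g ^ 2)).filter fun p => p.1.Coprime p.2).image
            fun p => (g * p.1, g * p.2)) := (card_le_card hsub).trans card_biUnion_le
    _ ≤ ∑ _g ∈ m.divisors, #m.divisors := by
      refine (sum_le_sum fun g hg => ?_).trans (sum_le_sum_of_subset (filter_subset _ _))
      obtain ⟨hg, hgm⟩ := mem_filter.mp hg
      refine card_image_le.trans <| (card_filter_coprime_sumSqReps_le _).trans <|
        (card_sq_eq_neg_one_zmod_le_card_divisors _).trans <| card_le_card ?_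
      exact Nat.divisors_subset_of_dvd (Nat.mem_divisors.mp hg).2 (Nat.div_dvd_of_dvd hgm)
    _ = #m.divisors ^ 2 := by rw [sum_const, smul_eq_mul, sq]

lemma exists_add_one_le_mul_pow {b : ℝ} (hb : 1 < b) :
    ∃ C : ℝ, 1 ≤ C ∧ ∀ e : ℕ, (e : ℝ) + 1 ≤ C * b ^ e := by
  set C := max 1 (b - 1)⁻¹
  have hC : 1 ≤ C := le_max_left _ _
  have hCb : 1 ≤ C * (b - 1) := by
    rw [← inv_le_iff_one_le_mul₀ (by linarith)]
    exact le_max_right _ _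
  refine ⟨C, hC, fun e => ?_⟩
  have hbern : 1 + e * (b - 1) ≤ b ^ e := by
    simpa using one_add_mul_le_pow (by linarith : -2 ≤ b - 1) e
  calc (e : ℝ) + 1 ≤ C * (1 + e * (b - 1)) := by
        nlinarith [(Nat.cast_nonneg e : (0 : ℝ) ≤ e)]
    _ ≤ C * b ^ e := by gcongr

lemma Nat.cast_rpow_eq_prod_primeFactors {n : ℕ} (hn : n ≠ 0) (ε : ℝ) :
    (n : ℝ) ^ ε = ∏ p ∈ n.primeFactors, ((p : ℝ) ^ ε) ^ n.factorization p := by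
  conv_lhs => rw [← Nat.prod_factorization_pow_eq_self hn]
  rw [Nat.prod_factorization_eq_prod_primeFactors]
  push_cast
  rw [← Real.finsetProd_rpow _ _ fun p _ => by positivity]
  exact prod_congr rfl fun p _ => (Real.rpow_pow_comm (Nat.cast_nonneg p) _ _).symm

theorem exists_card_divisors_le_mul_rpow {ε : ℝ} (hε : 0 < ε) :
    ∃ C : ℝ, 0 < C ∧ ∀ n : ℕ, (#n.divisors : ℝ) ≤ C * (n : ℝ) ^ ε := by
  obtain ⟨C₀, hC₀, hC₀e⟩ := exists_add_one_le_mul_pow (Real.one_lt_rpow one_lt_two hε)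
  -- only the primes below `K` need the constant `C₀`; for `p ≥ K` one has `p ^ ε ≥ 2`
  set K := ⌈(2 : ℝ) ^ ε⁻¹⌉₊
  refine ⟨C₀ ^ K, by positivity, fun n => ?_⟩
  rcases eq_or_ne n 0 with rfl | hn
  · simp [Real.zero_rpow hε.ne']
  have hfactor : ∀ p ∈ n.primeFactors, (n.factorization p : ℝ) + 1 ≤
      (if p < K then C₀ else 1) * ((p : ℝ) ^ ε) ^ n.factorization p := by
    intro p hp
    have hp2 : (2 : ℝ) ≤ p := by exact_mod_cast (Nat.prime_of_mem_primeFactors hp).two_le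
    split_ifs with hpK
    · calc _ ≤ C₀ * ((2 : ℝ) ^ ε) ^ n.factorization p := hC₀e _
        _ ≤ _ := by gcongr
    · have h2p : 2 ≤ (p : ℝ) ^ ε := by
        calc (2 : ℝ) = ((2 : ℝ) ^ ε⁻¹) ^ ε := (Real.rpow_inv_rpow zero_le_two hε.ne').symm
          _ ≤ (p : ℝ) ^ ε := by gcongr; exact Nat.ceil_le.mp (not_lt.mp hpK)
      calc (n.factorization p : ℝ) + 1 ≤ 2 ^ n.factorization p := by
            exact_mod_cast Nat.lt_two_pow_self
        _ ≤ _ := by rw [one_mul]; gcongr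
  have hsmall : ∏ p ∈ n.primeFactors, (if p < K then C₀ else 1) ≤ C₀ ^ K := by
    rw [prod_ite, prod_const, prod_const_one, mul_one]
    refine pow_le_pow_right₀ hC₀ ((card_le_card fun p hp => ?_).trans (card_range K).le)
    exact mem_range.mpr (mem_filter.mp hp).2
  calc (#n.divisors : ℝ) = ∏ p ∈ n.primeFactors, ((n.factorization p : ℝ) + 1) := by
        rw [Nat.card_divisors hn]; push_cast; rfl
    _ ≤ ∏ p ∈ n.primeFactors,
          (if p < K then C₀ else 1) * ((p : ℝ) ^ ε) ^ n.factorization p :=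
        prod_le_prod (fun _ _ => by positivity) hfactor
    _ ≤ C₀ ^ K * (n : ℝ) ^ ε := by
        rw [prod_mul_distrib, ← Nat.cast_rpow_eq_prod_primeFactors hn]
        gcongr

theorem exists_card_sumSqReps_le_mul_rpow {ε : ℝ} (hε : 0 < ε) :
    ∃ C : ℝ, 0 < C ∧ ∀ m : ℕ, (#(sumSqReps m) : ℝ) ≤ C * (m : ℝ) ^ ε := by
  obtain ⟨C, hC, hτ⟩ := exists_card_divisors_le_mul_rpow (half_pos hε)
  refine ⟨C ^ 2, by positivity, fun m => ?_⟩
  calc (#(sumSqReps m) : ℝ) ≤ (#m.divisors : ℝ) ^ 2 := by exact_mod_cast card_sumSqReps_le m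
    _ ≤ (C * (m : ℝ) ^ (ε / 2)) ^ 2 := by gcongr; exact hτ m
    _ = C ^ 2 * (m : ℝ) ^ ε := by
      rw [mul_pow, ← Real.rpow_mul_natCast (Nat.cast_nonneg _)]
      ring_nf

lemma Tcount_le_sum_card_sumSqReps (H : ℝ) (q : ℕ) :
    Tcount H q ≤
      ∑ m ∈ (Ioc 0 (2 * ⌊H⌋₊ ^ 2 + 1)).filter (q ∣ ·), #(sumSqReps (m - 1)) := by
  set L := ⌊H⌋₊
  have hmaps : ∀ p ∈ (Icc 1 L ×ˢ Icc 1 L).filter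
      (fun p : ℕ × ℕ => (q : ℤ) ∣ (p.1 : ℤ) ^ 2 + (p.2 : ℤ) ^ 2 + 1),
      p.1 ^ 2 + p.2 ^ 2 + 1 ∈ (Ioc 0 (2 * L ^ 2 + 1)).filter (q ∣ ·) := by
    intro p hp
    simp only [mem_filter, mem_product, mem_Icc] at hp
    obtain ⟨⟨⟨-, hxL⟩, -, hyL⟩, hdvd⟩ := hp
    refine mem_filter.mpr ⟨mem_Ioc.mpr ⟨by positivity, ?_⟩, by exact_mod_cast hdvd⟩
    have := Nat.pow_le_pow_left hxL 2
    have := Nat.pow_le_pow_left hyL 2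
    omega
  rw [Tcount, card_eq_sum_card_fiberwise hmaps]
  refine sum_le_sum fun m _ => card_le_card fun p hp => ?_
  simp only [mem_filter, mem_product, mem_Icc] at hp
  obtain ⟨⟨⟨⟨hx, -⟩, hy, -⟩, -⟩, hm⟩ := hp
  exact mem_sumSqReps.mpr ⟨hx, hy, by omega⟩

theorem stmt_12 : ∀ ε : ℝ, 0 < ε → ∃ C : ℝ, 0 < C ∧
    ∀ (d : ℕ) (H : ℝ), 0 < d → 2 ≤ H →
      (Tcount H (d^2) : ℝ) ≤ C * H ^ (2 + ε : ℝ) / (d : ℝ)^2 := by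
  intro ε hε
  obtain ⟨C, hC, hrep⟩ := exists_card_sumSqReps_le_mul_rpow (by positivity : 0 < ε / 3)
  refine ⟨3 * C, by positivity, fun d H _ hH => ?_⟩
  set L := ⌊H⌋₊
  set M := (Ioc 0 (2 * L ^ 2 + 1)).filter (d ^ 2 ∣ ·)
  have hLH : (L : ℝ) ≤ H := Nat.floor_le (by linarith)
  have hfiber : ∀ m ∈ M, (#(sumSqReps (m - 1)) : ℝ) ≤ C * H ^ ε := by
    intro m hm
    have hmL : m - 1 ≤ 2 * L ^ 2 := by have := (mem_Ioc.mp (mem_filter.mp hm).1).2; omega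
    have hmH : ((m - 1 : ℕ) : ℝ) ≤ H ^ 3 := by
      calc ((m - 1 : ℕ) : ℝ) ≤ 2 * (L : ℝ) ^ 2 := by exact_mod_cast hmL
        _ ≤ H * H ^ 2 := by gcongr
        _ = H ^ 3 := by ring
    calc _ ≤ C * ((m - 1 : ℕ) : ℝ) ^ (ε / 3) := hrep _
      _ ≤ C * (H ^ 3) ^ (ε / 3) := by gcongr
      _ = C * H ^ ε := by rw [← Real.rpow_natCast_mul (by linarith)]; ring_nf
  have hcount : (#M : ℝ) ≤ 3 * H ^ 2 / (d : ℝ) ^ 2 := by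
    calc (#M : ℝ) ≤ ((2 * L ^ 2 + 1 : ℕ) : ℝ) / ((d ^ 2 : ℕ) : ℝ) := by
          rw [Nat.Ioc_filter_dvd_card_eq_div]; exact Nat.cast_div_le
      _ ≤ 3 * H ^ 2 / (d : ℝ) ^ 2 := by push_cast; gcongr; nlinarith
  calc (Tcount H (d ^ 2) : ℝ) ≤ ∑ m ∈ M, (#(sumSqReps (m - 1)) : ℝ) := by
        exact_mod_cast Tcount_le_sum_card_sumSqReps H (d ^ 2)
    _ ≤ #M * (C * H ^ ε) := by simpa using sum_le_card_nsmul M _ _ hfiber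
    _ ≤ 3 * H ^ 2 / (d : ℝ) ^ 2 * (C * H ^ ε) := by gcongr
    _ = 3 * C * H ^ (2 + ε : ℝ) / (d : ℝ) ^ 2 := by
      rw [Real.rpow_add (by linarith), Real.rpow_two]; ring
end
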